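/- Suppose gcd([n]_s, q−1) = 1. Then every skew (σ,λ)-constacyclic code of length n over F_q is equivalent to a skew σ-cyclic code: there exists β ∈ F_q^* with β^([n]_s) = λ such that D_β(C) = {D_β(c) : c ∈ C} is a skew (σ,1)-constacyclic code. -/
import Mathlib


/-- The skew constacyclic shift `T_{σ,λ}` on `F^n`:
`T_{σ,λ}(c)_0 = λ·σ(c_{n−1})` and `T_{σ,λ}(c)_i = σ(c_{i−1})` for `1 ≤ i ≤ n−1`.
(Here `i - 1` is subtraction in `Fin n`, so `0 - 1 = n - 1`.) -/
def skewShift {F : Type*} [Field F] {n : ℕ} [NeZero n] (σ : F → F) (lam : F)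
    (c : Fin n → F) : Fin n → F :=
  fun i => if i = 0 then lam * σ (c (i - 1)) else σ (c (i - 1))

/-- The diagonal map `D_β : F^n → F^n`, `(D_β(c))_i = β^([i]_s)·c_i`,
where `[i]_s = ∑_{j<i} p^(s·j)`. -/
def diagMap (p s : ℕ) {F : Type*} [Field F] {n : ℕ} (β : F) (c : Fin n → F) :
    Fin n → F :=
  fun i => β ^ (∑ j ∈ Finset.range (i : ℕ), p ^ (s * j)) * c i

lemma sum_pow_succ_aux (p s k : ℕ) (hk : k ≠ 0) :
    ∑ j ∈ Finset.range k, p ^ (s * j)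
      = 1 + p ^ s * ∑ j ∈ Finset.range (k - 1), p ^ (s * j) := by
  obtain ⟨m, rfl⟩ := Nat.exists_eq_succ_of_ne_zero hk
  rw [Finset.sum_range_succ']
  simp only [Nat.mul_zero, pow_zero, Nat.succ_sub_one]
  rw [add_comm]
  congr 1
  rw [Finset.mul_sum]
  refine Finset.sum_congr rfl fun j _ => ?_
  rw [Nat.mul_succ, pow_add, mul_comm]


lemma fin_val_sub_one {n : ℕ} [NeZero n] (i : Fin n) :
    ((i - 1 : Fin n) : ℕ) = if i = 0 then n - 1 else (i : ℕ) - 1 := by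
  rcases n with _ | m
  · exact i.elim0
  · rw [Fin.coe_sub_one]
    rfl

/-- Suppose `gcd([n]_s, q−1) = 1`. Then every skew
`(σ,λ)`-constacyclic code `C` of length `n` over `F_q` (with `σ : a ↦ a^(p^s)`)
is equivalent to a skew `σ`-cyclic code: there is `β ∈ F_q^*` with
`β^([n]_s) = λ` such that `D_β(C)` is a skew `(σ,1)`-constacyclic code. -/
theorem stmt_10 (p r s n : ℕ) (hp : p.Prime) (hr : 1 ≤ r) (hs : s < r) [NeZero n]
    (F : Type*) [Field F] [Fintype F] (hF : Fintype.card F = p ^ r)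
    (hgcd : Nat.gcd (∑ j ∈ Finset.range n, p ^ (s * j)) (Fintype.card F - 1) = 1)
    (lam : F) (hlam : lam ≠ 0)
    (C : Submodule F (Fin n → F))
    (hC : ∀ c ∈ C, skewShift (fun a : F => a ^ p ^ s) lam c ∈ C) :
    ∃ β : F, β ≠ 0 ∧ β ^ (∑ j ∈ Finset.range n, p ^ (s * j)) = lam ∧
      ∃ C' : Submodule F (Fin n → F),
        (C' : Set (Fin n → F)) = diagMap p s β '' (C : Set (Fin n → F)) ∧
        ∀ c ∈ C', skewShift (fun a : F => a ^ p ^ s) (1 : F) c ∈ C' := by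
  classical
  set m := ∑ j ∈ Finset.range n, p ^ (s * j) with hm
  -- find β with β^m = lam
  have hcardU : Nat.card Fˣ = Fintype.card F - 1 := by
    rw [Nat.card_eq_fintype_card, Fintype.card_units]
  have hco : (Nat.card Fˣ).Coprime m := by
    rw [hcardU, Nat.coprime_comm]
    exact hgcd
  obtain ⟨u, hu⟩ := (powCoprime hco).surjective (Units.mk0 lam hlam)
  set β : F := (u : F) with hβdef
  have hβ0 : β ≠ 0 := Units.ne_zero u
  have hβm : β ^ m = lam := by
    have := congrArg (Units.val) hu
    simpa [powCoprime, hβdef] using this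
  -- the diagonal linear map
  set L : (Fin n → F) →ₗ[F] (Fin n → F) :=
    { toFun := diagMap p s β
      map_add' := by intro x y; funext i; simp [diagMap, mul_add]
      map_smul' := by intro a x; funext i; simp [diagMap]; ring }
  refine ⟨β, hβ0, hβm, C.map L, by simp [L, Submodule.map_coe], ?_⟩
  rintro c hc
  obtain ⟨x, hx, rfl⟩ := hc
  have key : skewShift (fun a : F => a ^ p ^ s) (1 : F) (L x)
      = β⁻¹ • L (skewShift (fun a : F => a ^ p ^ s) lam x) := by
    funext i
    by_cases hi : i = 0
    · subst hi
      have hne : (n : ℕ) ≠ 0 := NeZero.ne n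
      have hval : ((0 : Fin n) - 1).val = n - 1 := by
        rw [fin_val_sub_one, if_pos rfl]
      simp only [skewShift, if_pos rfl, Pi.smul_apply, smul_eq_mul]
      show 1 * (L x (0 - 1)) ^ p ^ s = β⁻¹ * (L (fun i => if i = 0 then _ else _) 0)
      have hL1 : L x (0 - 1) = β ^ (∑ j ∈ Finset.range (n - 1), p ^ (s * j)) * x (0 - 1) := by
        show diagMap p s β x (0 - 1) = _
        unfold diagMap
        rw [hval]
      have hL2 : (L (skewShift (fun a : F => a ^ p ^ s) lam x)) 0
          = lam * (x (0 - 1)) ^ p ^ s := by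
        simp [L, diagMap, skewShift]
      show 1 * (L x (0 - 1)) ^ p ^ s = β⁻¹ * (L (skewShift (fun a : F => a ^ p ^ s) lam x)) 0
      rw [hL1, hL2, one_mul, mul_pow, ← pow_mul]
      have hlameq : lam = β * β ^ (p ^ s * ∑ j ∈ Finset.range (n - 1), p ^ (s * j)) := by
        rw [← hβm, hm, sum_pow_succ_aux p s n hne, pow_add, pow_one]
      rw [hlameq, ← mul_assoc, ← mul_assoc, inv_mul_cancel₀ hβ0, one_mul,
        mul_comm (∑ j ∈ Finset.range (n - 1), p ^ (s * j)) (p ^ s)]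
    · have hval : (i - 1).val = i.val - 1 := by
        rw [fin_val_sub_one, if_neg hi]
      have hine : (i : ℕ) ≠ 0 := fun h => hi (Fin.ext h)
      simp only [skewShift, if_neg hi, Pi.smul_apply, smul_eq_mul]
      have hL1 : L x (i - 1) = β ^ (∑ j ∈ Finset.range ((i : ℕ) - 1), p ^ (s * j)) * x (i - 1) := by
        show diagMap p s β x (i - 1) = _
        unfold diagMap
        rw [hval]
      have hL2 : (L (skewShift (fun a : F => a ^ p ^ s) lam x)) i
          = β ^ (∑ j ∈ Finset.range (i : ℕ), p ^ (s * j)) * (x (i - 1)) ^ p ^ s := by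
        simp [L, diagMap, skewShift, if_neg hi]
      show (L x (i - 1)) ^ p ^ s = β⁻¹ * (L (skewShift (fun a : F => a ^ p ^ s) lam x)) i
      rw [hL1, hL2, mul_pow, ← pow_mul, sum_pow_succ_aux p s (i : ℕ) hine, pow_add, pow_one,
        ← mul_assoc, ← mul_assoc, inv_mul_cancel₀ hβ0, one_mul, pow_mul, ← pow_mul,
        mul_comm (∑ j ∈ Finset.range ((i:ℕ) - 1), p ^ (s * j)) (p ^ s), pow_mul]
  rw [key]
  exact Submodule.smul_mem _ _ (Submodule.mem_map_of_mem (hC x hx))
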